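/- The M-elimination transformation for a negative heuristic atom ({M}, a) ∈ C⁻ replaces the condition (C⁺, C⁻) by two conditions: one where ({M}, a) is removed from C⁻ and ({F, T}, a) is added to C⁺, and one where ({M}, a) in C⁻ is replaced by ({F, M, T}, a). The original condition is satisfied w.r.t. A if and only if at least one of the two resulting conditions is satisfied w.r.t. A. -/
import Mathlib


inductive TV | T | M | F | U
deriving DecidableEq

/-- A heuristic atom: a sign set together with an atom. -/
abbrev HAtom (α : Type) := Finset TV × α

/-- A heuristic atom is satisfied w.r.t. the truth function `tv` of an assignment. -/
def satHA {α : Type} (tv : α → TV) (h : HAtom α) : Prop := tv h.2 ∈ h.1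

/-- A heuristic condition `(Cp, Cn)` is satisfied iff every member of `Cp` is satisfied
and no member of `Cn` is satisfied. -/
def SatCond {α : Type} (tv : α → TV) (Cp Cn : Finset (HAtom α)) : Prop :=
  (∀ h ∈ Cp, satHA tv h) ∧ (∀ h ∈ Cn, ¬ satHA tv h)

/-- Negative M-elimination: for `({M}, a) ∈ Cn`, the original condition is satisfied iff
either the condition with `({M}, a)` removed from `Cn` and `({F, T}, a)` added to `Cp`,
or the condition with `({M}, a)` replaced by `({F, M, T}, a)` in `Cn`, is satisfied. -/
theorem stmt10 {α : Type} [DecidableEq α] (tv : α → TV)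
    (Cp Cn : Finset (HAtom α)) (a : α)
    (hmem : (({TV.M} : Finset TV), a) ∈ Cn) :
    SatCond tv Cp Cn ↔
      SatCond tv (insert (({TV.F, TV.T} : Finset TV), a) Cp) (Cn.erase ({TV.M}, a)) ∨
      SatCond tv Cp (insert (({TV.F, TV.M, TV.T} : Finset TV), a) (Cn.erase ({TV.M}, a))) := by
  constructor
  · rintro ⟨hp, hn⟩
    have hna : tv a ≠ TV.M := by
      have := hn _ hmem
      simpa [satHA] using this
    cases h : tv a with
    | M => exact absurd h hna
    | U =>
      right
      refine ⟨hp, ?_⟩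
      intro x hx
      rcases Finset.mem_insert.mp hx with rfl | hx
      · simp [satHA, h]
      · exact hn _ (Finset.mem_of_mem_erase hx)
    | F =>
      left
      refine ⟨?_, fun x hx => hn _ (Finset.mem_of_mem_erase hx)⟩
      intro x hx
      rcases Finset.mem_insert.mp hx with rfl | hx
      · simp [satHA, h]
      · exact hp _ hx
    | T =>
      left
      refine ⟨?_, fun x hx => hn _ (Finset.mem_of_mem_erase hx)⟩
      intro x hx
      rcases Finset.mem_insert.mp hx with rfl | hx
      · simp [satHA, h]
      · exact hp _ hx
  · rintro (⟨hp, hn⟩ | ⟨hp, hn⟩)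
    · refine ⟨fun x hx => hp _ (Finset.mem_insert_of_mem hx), ?_⟩
      intro x hx
      by_cases hx' : x = (({TV.M} : Finset TV), a)
      · subst hx'
        have := hp _ (Finset.mem_insert_self _ _)
        simp only [satHA] at this ⊢
        rcases Finset.mem_insert.mp this with h | h <;> simp_all
      · exact hn _ (Finset.mem_erase.mpr ⟨hx', hx⟩)
    · refine ⟨hp, ?_⟩
      intro x hx
      by_cases hx' : x = (({TV.M} : Finset TV), a)
      · subst hx'
        have := hn _ (Finset.mem_insert_self _ _)
        simp only [satHA] at this ⊢
        simp_all
      · exact hn _ (Finset.mem_insert_of_mem (Finset.mem_erase.mpr ⟨hx', hx⟩))
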